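/- For the double-power ODE ẋ = −κ₁|x|^{γ₁} sgn(x) − κ₂|x|^{γ₂} sgn(x) with κ₁, κ₂ > 0, 0 < γ₁ < 1 < γ₂ and |x₀| ≥ 1, the settling time satisfies T(x₀) ≤ 1/(κ₁(1−γ₁)) + (1 − |x₀|^{1−γ₂})/(κ₂(γ₂−1)) and T(x₀) ≥ ln((1 + κ₂/κ₁)/(|x₀|^{1−γ₂} + κ₂/κ₁))/(κ₁(γ₂−1)) + ln(1 + κ₂/κ₁)/(κ₂(1−γ₁)). -/

import Mathlib

/-!
By the symmetry `x ↦ -x` we may assume `x₀ ≥ 1`. Before its first zero the solution is positive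
and solves `ẋ = -f x` with `f y = κ₁ y^γ₁ + κ₂ y^γ₂`. If `G' = 1 / g`, then `t ↦ G (x t) + t` is
monotone as soon as `f ≤ g` or `g ≤ f`, so the travel times of `x` are compared with those of
`ẏ = -g y`, which are explicit for `g y = k y^q` and for `g y = a y^q + b y`.

Upper bound: since `f ≥ κ₂ y^γ₂`, the solution falls from `x₀` to `1` within
`(1 - x₀^(1-γ₂)) / (κ₂ (γ₂ - 1))`; since `f ≥ κ₁ y^γ₁`, it then reaches `0` within
`1 / (κ₁ (1 - γ₁))`. Lower bound: `f y ≤ κ₂ y^γ₂ + κ₁ y` for `y ≥ 1` and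
`f y ≤ κ₁ y^γ₁ + κ₂ y` for `y ≤ 1`, whose travel times are the two logarithms.
-/

/-- Signed power `|y|^γ sgn(y)` appearing in the attracting laws. -/
noncomputable def spow (y γ : ℝ) : ℝ := |y| ^ γ * Real.sign y

open Real Set

theorem spow_of_pos {y : ℝ} (hy : 0 < y) (γ : ℝ) : spow y γ = y ^ γ := by
  simp [spow, abs_of_pos hy, Real.sign_of_pos hy]

theorem spow_neg (y γ : ℝ) : spow (-y) γ = -spow y γ := by
  simp [spow, Real.sign_neg]

theorem pos_of_forall_ne_zero {x : ℝ → ℝ} {a b : ℝ} (hab : a ≤ b) (hx : ContinuousOn x (Icc a b))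
    (ha : 0 < x a) (hne : ∀ t ∈ Icc a b, x t ≠ 0) : 0 < x b := by
  by_contra! hb
  obtain ⟨t, ht, hxt⟩ := intermediate_value_Icc' hab hx ⟨hb, ha.le⟩
  exact hne t ht hxt

section TravelTime

variable {x f g G : ℝ → ℝ} {s : Set ℝ} {a b : ℝ}

theorem hasDerivAt_comp_add_id {t : ℝ} (hx : HasDerivAt x (-f (x t)) t)
    (hG : HasDerivAt G (g (x t))⁻¹ (x t)) :
    HasDerivAt (fun t => G (x t) + t) (1 - f (x t) / g (x t)) t := by
  refine ((hG.comp t hx).add (hasDerivAt_id' t)).congr_deriv ?_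
  rw [mul_neg, inv_mul_eq_div]
  ring

/-- With `G' = 1 / g`, `G (x a) - G (x b)` is the time `ẏ = -g y` takes from `x a` to `x b`;
a solution of the slower law `ẋ = -f x`, `f ≤ g`, needs at least as long. -/
theorem comp_sub_comp_le_of_le (hab : a ≤ b) (hGx : ContinuousOn (G ∘ x) (Icc a b))
    (hx : ∀ t ∈ Ioo a b, HasDerivAt x (-f (x t)) t) (hxs : MapsTo x (Ioo a b) s)
    (hG : ∀ y ∈ s, HasDerivAt G (g y)⁻¹ y) (hg : ∀ y ∈ s, 0 < g y)
    (hfg : ∀ y ∈ s, f y ≤ g y) :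
    G (x a) - G (x b) ≤ b - a := by
  have hmono : MonotoneOn (fun t => G (x t) + t) (Icc a b) := by
    refine monotoneOn_of_hasDerivWithinAt_nonneg (convex_Icc a b) (hGx.add continuousOn_id)
      (f' := fun t => 1 - f (x t) / g (x t)) (fun t ht => ?_) (fun t ht => ?_) <;>
      rw [interior_Icc] at ht
    · exact (hasDerivAt_comp_add_id (hx t ht) (hG _ (hxs ht))).hasDerivWithinAt
    · exact sub_nonneg.2 ((div_le_one₀ (hg _ (hxs ht))).2 (hfg _ (hxs ht)))
  linarith [hmono (left_mem_Icc.2 hab) (right_mem_Icc.2 hab) hab]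

theorem le_comp_sub_comp_of_le (hab : a ≤ b) (hGx : ContinuousOn (G ∘ x) (Icc a b))
    (hx : ∀ t ∈ Ioo a b, HasDerivAt x (-f (x t)) t) (hxs : MapsTo x (Ioo a b) s)
    (hG : ∀ y ∈ s, HasDerivAt G (g y)⁻¹ y) (hg : ∀ y ∈ s, 0 < g y)
    (hgf : ∀ y ∈ s, g y ≤ f y) :
    b - a ≤ G (x a) - G (x b) := by
  have hanti : AntitoneOn (fun t => G (x t) + t) (Icc a b) := by
    refine antitoneOn_of_hasDerivWithinAt_nonpos (convex_Icc a b) (hGx.add continuousOn_id)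
      (f' := fun t => 1 - f (x t) / g (x t)) (fun t ht => ?_) (fun t ht => ?_) <;>
      rw [interior_Icc] at ht
    · exact (hasDerivAt_comp_add_id (hx t ht) (hG _ (hxs ht))).hasDerivWithinAt
    · exact sub_nonpos.2 ((one_le_div₀ (hg _ (hxs ht))).2 (hgf _ (hxs ht)))
  linarith [hanti (left_mem_Icc.2 hab) (right_mem_Icc.2 hab) hab]

end TravelTime

theorem hasDerivAt_rpow_one_sub_div {k q y : ℝ} (hk : k ≠ 0) (hq : q ≠ 1) (hy : 0 < y) :
    HasDerivAt (fun y => y ^ (1 - q) / (k * (1 - q))) (k * y ^ q)⁻¹ y := by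
  refine ((hasDerivAt_rpow_const (p := 1 - q) (Or.inl hy.ne')).div_const
    (k * (1 - q))).congr_deriv ?_
  have hq' : 1 - q ≠ 0 := sub_ne_zero.2 hq.symm
  rw [sub_sub_cancel_left, rpow_neg hy.le]
  field_simp

theorem hasDerivAt_log_add_mul_rpow_div {a b q y : ℝ} (ha : 0 ≤ a) (hb : 0 < b) (hq : q ≠ 1)
    (hy : 0 < y) :
    HasDerivAt (fun y => log (a + b * y ^ (1 - q)) / (b * (1 - q))) (a * y ^ q + b * y)⁻¹ y := by
  have hpos : 0 < a + b * y ^ (1 - q) := by positivity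
  refine (((((hasDerivAt_rpow_const (p := 1 - q) (Or.inl hy.ne')).const_mul b).const_add a).log
    hpos.ne').div_const (b * (1 - q))).congr_deriv ?_
  have hq' : 1 - q ≠ 0 := sub_ne_zero.2 hq.symm
  have hyq : y ^ q * y ^ (1 - q) = y := by rw [← rpow_add hy]; simp
  rw [sub_sub_cancel_left, rpow_neg hy.le]
  have : 0 < y ^ q := by positivity
  field_simp
  linear_combination -b * hyq

theorem continuousOn_log_add_mul_rpow_div {a b q : ℝ} (ha : 0 < a) (hb : 0 ≤ b) (hq : q < 1) :
    ContinuousOn (fun y => log (a + b * y ^ (1 - q)) / (b * (1 - q))) (Ici 0) := by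
  refine (ContinuousOn.log ?_ fun y hy => ?_).div_const _
  · exact (continuous_const.add (continuous_const.mul
      (continuous_rpow_const (by linarith)))).continuousOn
  · have : 0 ≤ y ^ (1 - q) := rpow_nonneg hy _
    positivity

def IsDoublePowerSolution (κ₁ κ₂ γ₁ γ₂ : ℝ) (x : ℝ → ℝ) : Prop :=
  ∀ t, 0 ≤ t → HasDerivAt x (-κ₁ * spow (x t) γ₁ - κ₂ * spow (x t) γ₂) t

/-- Since `sInf ∅ = 0`, this is the first zero of `x` on `[0, ∞)` only once some zero exists. -/
noncomputable def settlingTime (x : ℝ → ℝ) : ℝ := sInf {t | 0 ≤ t ∧ x t = 0}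

section SettlingTime

variable {x : ℝ → ℝ} {t : ℝ}

theorem settlingTime_neg : settlingTime (fun t => -x t) = settlingTime x := by
  simp only [settlingTime, neg_eq_zero]

theorem settlingTime_le (ht : 0 ≤ t) (hxt : x t = 0) : settlingTime x ≤ t :=
  csInf_le ⟨0, fun _ hs => hs.1⟩ ⟨ht, hxt⟩

theorem settlingTime_mem (hx : ContinuousOn x (Ici 0)) (hZ : ∃ t, 0 ≤ t ∧ x t = 0) :
    0 ≤ settlingTime x ∧ x (settlingTime x) = 0 :=
  (hx.preimage_isClosed_of_isClosed isClosed_Ici isClosed_singleton).csInf_mem hZ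
    ⟨0, fun _ hs => hs.1⟩

theorem pos_of_lt_settlingTime (hx : ContinuousOn x (Ici 0)) (hx0 : 0 < x 0)
    (ht : t ∈ Ico 0 (settlingTime x)) : 0 < x t :=
  pos_of_forall_ne_zero ht.1 (hx.mono Icc_subset_Ici_self) hx0 fun _ hs hxs =>
    (settlingTime_le hs.1 hxs).not_gt (hs.2.trans_lt ht.2)

end SettlingTime

namespace IsDoublePowerSolution

variable {κ₁ κ₂ γ₁ γ₂ : ℝ} {x : ℝ → ℝ}

theorem neg (h : IsDoublePowerSolution κ₁ κ₂ γ₁ γ₂ x) :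
    IsDoublePowerSolution κ₁ κ₂ γ₁ γ₂ (fun t => -x t) := fun t ht => by
  refine (h t ht).neg.congr_deriv ?_
  rw [spow_neg, spow_neg]
  ring

theorem continuousOn (h : IsDoublePowerSolution κ₁ κ₂ γ₁ γ₂ x) : ContinuousOn x (Ici 0) :=
  fun t ht => (h t ht).continuousAt.continuousWithinAt

theorem hasDerivAt_of_pos (h : IsDoublePowerSolution κ₁ κ₂ γ₁ γ₂ x) {t : ℝ} (ht : 0 ≤ t)
    (hxt : 0 < x t) : HasDerivAt x (-(κ₁ * x t ^ γ₁ + κ₂ * x t ^ γ₂)) t := by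
  refine (h t ht).congr_deriv ?_
  rw [spow_of_pos hxt, spow_of_pos hxt]
  ring

theorem sub_le_rpow_div_sub_rpow_div (h : IsDoublePowerSolution κ₁ κ₂ γ₁ γ₂ x) {k q a b : ℝ}
    (hk : 0 < k) (hq : q ≠ 1) (hkf : ∀ y > 0, k * y ^ q ≤ κ₁ * y ^ γ₁ + κ₂ * y ^ γ₂)
    (ha : 0 ≤ a) (hab : a ≤ b) (hpos : ∀ t ∈ Icc a b, 0 < x t) :
    b - a ≤ x a ^ (1 - q) / (k * (1 - q)) - x b ^ (1 - q) / (k * (1 - q)) := by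
  have hG : ∀ y ∈ Ioi (0 : ℝ), HasDerivAt (fun y => y ^ (1 - q) / (k * (1 - q))) (k * y ^ q)⁻¹ y :=
    fun y hy => hasDerivAt_rpow_one_sub_div hk.ne' hq hy
  refine le_comp_sub_comp_of_le (f := fun y => κ₁ * y ^ γ₁ + κ₂ * y ^ γ₂) hab
    (ContinuousOn.comp (fun y hy => (hG y hy).continuousAt.continuousWithinAt)
      (h.continuousOn.mono (Icc_subset_Ici_iff hab |>.2 ha)) hpos)
    (fun t ht => h.hasDerivAt_of_pos (ha.trans ht.1.le) (hpos t (Ioo_subset_Icc_self ht)))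
    (fun t ht => hpos t (Ioo_subset_Icc_self ht)) hG
    (fun y hy => mul_pos hk (rpow_pos_of_pos hy q)) hkf

theorem exists_eq_zero (h : IsDoublePowerSolution κ₁ κ₂ γ₁ γ₂ x) (hκ₁ : 0 < κ₁) (hκ₂ : 0 < κ₂)
    (hγ₁ : γ₁ < 1) (hγ₂ : 1 < γ₂) (hx0 : 1 ≤ x 0) :
    ∃ t ∈ Icc 0 (1 / (κ₁ * (1 - γ₁)) + (1 - x 0 ^ (1 - γ₂)) / (κ₂ * (γ₂ - 1))), x t = 0 := by
  set t₁ := (1 - x 0 ^ (1 - γ₂)) / (κ₂ * (γ₂ - 1))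
  set U := 1 / (κ₁ * (1 - γ₁)) + t₁
  have hγ₁' : 0 < κ₁ * (1 - γ₁) := mul_pos hκ₁ (by linarith)
  have hγ₂' : 0 < κ₂ * (γ₂ - 1) := mul_pos hκ₂ (by linarith)
  have ht₁ : 0 ≤ t₁ :=
    div_nonneg (sub_nonneg.2 (rpow_le_one_of_one_le_of_nonpos hx0 (by linarith))) hγ₂'.le
  have ht₁U : t₁ ≤ U := le_add_of_nonneg_left (by positivity)
  by_contra! hne
  have hpos : ∀ t ∈ Icc 0 U, 0 < x t := fun t ht =>
    pos_of_forall_ne_zero ht.1 (h.continuousOn.mono Icc_subset_Ici_self) (by linarith)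
      fun s hs => hne s ⟨hs.1, hs.2.trans ht.2⟩
  -- along `ẏ ≤ -κ₂ y^γ₂` the level `1` is reached by time `t₁`
  have hxt₁ : x t₁ ≤ 1 := by
    have hfall := h.sub_le_rpow_div_sub_rpow_div hκ₂ hγ₂.ne'
      (fun y hy => le_add_of_nonneg_left (by positivity)) le_rfl ht₁
      fun t ht => hpos t ⟨ht.1, ht.2.trans ht₁U⟩
    have hneg : κ₂ * (1 - γ₂) = -(κ₂ * (γ₂ - 1)) := by ring
    rw [sub_zero, ← sub_div, hneg, div_neg, ← neg_div, neg_sub,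
      div_le_div_iff_of_pos_right hγ₂', sub_le_sub_iff_right] at hfall
    by_contra! hgt
    exact (rpow_lt_one_of_one_lt_of_neg hgt (by linarith)).not_ge hfall
  -- and then `ẏ ≤ -κ₁ y^γ₁` reaches `0` within `1 / (κ₁ (1 - γ₁))` more
  have hreach := h.sub_le_rpow_div_sub_rpow_div hκ₁ hγ₁.ne
    (fun y hy => le_add_of_nonneg_right (by positivity)) ht₁ ht₁U
    fun t ht => hpos t ⟨ht₁.trans ht.1, ht.2⟩
  rw [add_sub_cancel_right, ← sub_div, div_le_div_iff_of_pos_right hγ₁'] at hreach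
  have hxt₁' : x t₁ ^ (1 - γ₁) ≤ 1 :=
    rpow_le_one (hpos t₁ ⟨ht₁, ht₁U⟩).le hxt₁ (by linarith)
  have hxU : 0 < x U ^ (1 - γ₁) := rpow_pos_of_pos (hpos U ⟨ht₁.trans ht₁U, le_rfl⟩) _
  linarith

theorem antitoneOn_Icc_settlingTime (h : IsDoublePowerSolution κ₁ κ₂ γ₁ γ₂ x) (hκ₁ : 0 < κ₁)
    (hκ₂ : 0 < κ₂) (hx0 : 0 < x 0) : AntitoneOn x (Icc 0 (settlingTime x)) := by
  refine antitoneOn_of_hasDerivWithinAt_nonpos (convex_Icc 0 _)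
    (h.continuousOn.mono Icc_subset_Ici_self)
    (f' := fun t => -(κ₁ * x t ^ γ₁ + κ₂ * x t ^ γ₂)) (fun t ht => ?_) (fun t ht => ?_) <;>
    rw [interior_Icc] at ht <;>
    have hxt := pos_of_lt_settlingTime h.continuousOn hx0 (Ioo_subset_Ico_self ht)
  · exact (h.hasDerivAt_of_pos ht.1.le hxt).hasDerivWithinAt
  · simp only [Left.neg_nonpos_iff]
    positivity

theorem log_div_sub_log_div_le_of_one_le (h : IsDoublePowerSolution κ₁ κ₂ γ₁ γ₂ x)
    (hκ₁ : 0 < κ₁) (hκ₂ : 0 < κ₂) (hγ₁ : γ₁ ≤ 1) (hγ₂ : γ₂ ≠ 1) {a b : ℝ} (ha : 0 ≤ a)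
    (hab : a ≤ b) (hx : ∀ t ∈ Icc a b, 1 ≤ x t) :
    log (κ₂ + κ₁ * x a ^ (1 - γ₂)) / (κ₁ * (1 - γ₂)) -
      log (κ₂ + κ₁ * x b ^ (1 - γ₂)) / (κ₁ * (1 - γ₂)) ≤ b - a := by
  have hG : ∀ y ∈ Ici (1 : ℝ),
      HasDerivAt (fun y => log (κ₂ + κ₁ * y ^ (1 - γ₂)) / (κ₁ * (1 - γ₂)))
        (κ₂ * y ^ γ₂ + κ₁ * y)⁻¹ y := fun y hy =>
    hasDerivAt_log_add_mul_rpow_div hκ₂.le hκ₁ hγ₂ (zero_lt_one.trans_le hy)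
  refine comp_sub_comp_le_of_le hab (f := fun y => κ₁ * y ^ γ₁ + κ₂ * y ^ γ₂)
    (ContinuousOn.comp (fun y hy => (hG y hy).continuousAt.continuousWithinAt)
      (h.continuousOn.mono (Icc_subset_Ici_iff hab |>.2 ha)) hx)
    (fun t ht => h.hasDerivAt_of_pos (ha.trans ht.1.le)
      (zero_lt_one.trans_le (hx t (Ioo_subset_Icc_self ht))))
    (fun t ht => hx t (Ioo_subset_Icc_self ht)) hG
    (fun y hy => by have : (0 : ℝ) < y := zero_lt_one.trans_le hy; positivity)
    (fun y hy => by
      have := rpow_le_self_of_one_le hy hγ₁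
      nlinarith)

theorem log_div_sub_log_div_le_of_le_one (h : IsDoublePowerSolution κ₁ κ₂ γ₁ γ₂ x)
    (hκ₁ : 0 < κ₁) (hκ₂ : 0 < κ₂) (hγ₁ : γ₁ < 1) (hγ₂ : 1 ≤ γ₂) {a b : ℝ} (ha : 0 ≤ a)
    (hab : a ≤ b) (hx : ∀ t ∈ Icc a b, x t ∈ Icc 0 1) (hpos : ∀ t ∈ Ioo a b, 0 < x t) :
    log (κ₁ + κ₂ * x a ^ (1 - γ₁)) / (κ₂ * (1 - γ₁)) -
      log (κ₁ + κ₂ * x b ^ (1 - γ₁)) / (κ₂ * (1 - γ₁)) ≤ b - a :=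
  comp_sub_comp_le_of_le hab (s := Ioc 0 1) (f := fun y => κ₁ * y ^ γ₁ + κ₂ * y ^ γ₂)
    (g := fun y => κ₁ * y ^ γ₁ + κ₂ * y)
    ((continuousOn_log_add_mul_rpow_div hκ₁ hκ₂.le hγ₁).comp
      (h.continuousOn.mono (Icc_subset_Ici_iff hab |>.2 ha)) fun t ht => (hx t ht).1)
    (fun t ht => h.hasDerivAt_of_pos (ha.trans ht.1.le) (hpos t ht))
    (fun t ht => ⟨hpos t ht, (hx t (Ioo_subset_Icc_self ht)).2⟩)
    (fun y hy => hasDerivAt_log_add_mul_rpow_div hκ₁.le hκ₂ hγ₁.ne hy.1)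
    (fun y hy => by have := hy.1; positivity)
    (fun y hy => by
      have := rpow_le_self_of_le_one hy.1.le hy.2 hγ₂
      nlinarith)

theorem le_settlingTime (h : IsDoublePowerSolution κ₁ κ₂ γ₁ γ₂ x) (hκ₁ : 0 < κ₁) (hκ₂ : 0 < κ₂)
    (hγ₁ : γ₁ < 1) (hγ₂ : 1 < γ₂) (hx0 : 1 ≤ x 0) (hZ : ∃ t, 0 ≤ t ∧ x t = 0) :
    log ((1 + κ₂ / κ₁) / (x 0 ^ (1 - γ₂) + κ₂ / κ₁)) / (κ₁ * (γ₂ - 1)) +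
      log (1 + κ₂ / κ₁) / (κ₂ * (1 - γ₁)) ≤ settlingTime x := by
  obtain ⟨hT, hxT⟩ := settlingTime_mem h.continuousOn hZ
  have hanti := h.antitoneOn_Icc_settlingTime hκ₁ hκ₂ (by linarith)
  set T := settlingTime x
  obtain ⟨t₁, ht₁, hxt₁⟩ : ∃ t₁ ∈ Icc 0 T, x t₁ = 1 :=
    intermediate_value_Icc' hT (h.continuousOn.mono Icc_subset_Ici_self)
      ⟨hxT ▸ zero_le_one, hx0⟩
  have hA := h.log_div_sub_log_div_le_of_one_le hκ₁ hκ₂ hγ₁.le hγ₂.ne' le_rfl ht₁.1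
    fun t ht => hxt₁ ▸ hanti ⟨ht.1, ht.2.trans ht₁.2⟩ ht₁ ht.2
  have hB := h.log_div_sub_log_div_le_of_le_one hκ₁ hκ₂ hγ₁ hγ₂.le ht₁.1 ht₁.2
    (fun t ht => ⟨hxT ▸ hanti ⟨ht₁.1.trans ht.1, ht.2⟩ ⟨hT, le_rfl⟩ ht.2,
      hxt₁ ▸ hanti ht₁ ⟨ht₁.1.trans ht.1, ht.2⟩ ht.1⟩)
    fun t ht => pos_of_lt_settlingTime h.continuousOn (by linarith)
      ⟨(ht₁.1.trans_lt ht.1).le, ht.2⟩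
  simp only [hxt₁, hxT, one_rpow, mul_one, zero_rpow (sub_ne_zero.2 hγ₁.ne'), mul_zero,
    add_zero, sub_zero] at hA hB
  have hp : 0 < x 0 ^ (1 - γ₂) := rpow_pos_of_pos (by linarith) _
  have hratio : (1 + κ₂ / κ₁) / (x 0 ^ (1 - γ₂) + κ₂ / κ₁) =
      (κ₁ + κ₂) / (κ₂ + κ₁ * x 0 ^ (1 - γ₂)) := by
    field_simp
    ring
  have hone : 1 + κ₂ / κ₁ = (κ₁ + κ₂) / κ₁ := by field_simp
  rw [hratio, hone, log_div (by positivity) (by positivity), log_div (by positivity) hκ₁.ne']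
  have hγ₂' : κ₁ * (γ₂ - 1) = -(κ₁ * (1 - γ₂)) := by ring
  rw [hγ₂', div_neg, ← neg_div, neg_sub, sub_div, sub_div]
  rw [add_comm κ₂ κ₁] at hA
  linarith

end IsDoublePowerSolution

theorem stmt_10_general (κ₁ κ₂ γ₁ γ₂ : ℝ)
    (hκ₁ : 0 < κ₁) (hκ₂ : 0 < κ₂)
    (hγ₁1 : γ₁ < 1) (hγ₂ : 1 < γ₂)
    (x : ℝ → ℝ) (x₀ : ℝ) (hx0 : x 0 = x₀) (hx₀ : 1 ≤ |x₀|)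
    (hode : ∀ t, 0 ≤ t →
      HasDerivAt x (-κ₁ * spow (x t) γ₁ - κ₂ * spow (x t) γ₂) t) :
    sInf {t : ℝ | 0 ≤ t ∧ x t = 0} ≤
      1 / (κ₁ * (1 - γ₁)) + (1 - |x₀| ^ (1 - γ₂)) / (κ₂ * (γ₂ - 1)) ∧
    sInf {t : ℝ | 0 ≤ t ∧ x t = 0} ≥
      Real.log ((1 + κ₂ / κ₁) / (|x₀| ^ (1 - γ₂) + κ₂ / κ₁)) / (κ₁ * (γ₂ - 1)) +
      Real.log (1 + κ₂ / κ₁) / (κ₂ * (1 - γ₁)) := by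
  change IsDoublePowerSolution κ₁ κ₂ γ₁ γ₂ x at hode
  change settlingTime x ≤ _ ∧ settlingTime x ≥ _
  wlog hpos : 0 ≤ x₀ generalizing x x₀
  · have := this (fun t => -x t) (-x₀) (by rw [hx0]) (by rwa [abs_neg]) hode.neg (by linarith)
    rwa [abs_neg, settlingTime_neg] at this
  subst hx0
  rw [abs_of_nonneg hpos] at hx₀ ⊢
  obtain ⟨t, ht, hxt⟩ := hode.exists_eq_zero hκ₁ hκ₂ hγ₁1 hγ₂ hx₀
  exact ⟨(settlingTime_le ht.1 hxt).trans ht.2,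
    hode.le_settlingTime hκ₁ hκ₂ hγ₁1 hγ₂ hx₀ ⟨t, ht.1, hxt⟩⟩

theorem stmt_10 (κ₁ κ₂ γ₁ γ₂ : ℝ)
    (hκ₁ : 0 < κ₁) (hκ₂ : 0 < κ₂)
    (hγ₁0 : 0 < γ₁) (hγ₁1 : γ₁ < 1) (hγ₂ : 1 < γ₂)
    (x : ℝ → ℝ) (x₀ : ℝ) (hx0 : x 0 = x₀) (hx₀ : 1 ≤ |x₀|)
    (hode : ∀ t, 0 ≤ t →
      HasDerivAt x (-κ₁ * spow (x t) γ₁ - κ₂ * spow (x t) γ₂) t) :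
    sInf {t : ℝ | 0 ≤ t ∧ x t = 0} ≤
      1 / (κ₁ * (1 - γ₁)) + (1 - |x₀| ^ (1 - γ₂)) / (κ₂ * (γ₂ - 1)) ∧
    sInf {t : ℝ | 0 ≤ t ∧ x t = 0} ≥
      Real.log ((1 + κ₂ / κ₁) / (|x₀| ^ (1 - γ₂) + κ₂ / κ₁)) / (κ₁ * (γ₂ - 1)) +
      Real.log (1 + κ₂ / κ₁) / (κ₂ * (1 - γ₁)) :=
  stmt_10_general κ₁ κ₂ γ₁ γ₂ hκ₁ hκ₂ hγ₁1 hγ₂ x x₀ hx0 hx₀ hode
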